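/- Let κ ≥ 1 and 0 < δ < ∞. With T̃_{δ,κ−1/2}(n) defined as the odd shallow-water multiplier (normalized so that ã_{2κ−1,1} = 3 and 𝔏_δ(n) → n²/3 as δ → 0) and T̃_{δ,κ}(n) the even one (with ã_{2κ,0} = 1), one has the pointwise limits lim_{δ→0} T̃_{δ,κ−1/2}(n) = lim_{δ→0} T̃_{δ,κ}(n) = n^{2κ} for every nonzero integer n. Moreover, for fixed 0 < δ ≤ 1, |n|^{2κ−1} ≲_δ T̃_{δ,κ−1/2}(n) ≲ min(δ^{−1}|n|^{2κ−1}, n^{2κ}) and T̃_{δ,κ}(n) is comparable to n^{2κ} uniformly in n and δ. -/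

import Mathlib

/-!
With `x = δ|n|` one has `𝔏_δ(n) = (x coth x - 1) / δ²`, and the elementary bounds
`x³ / (3 sinh x) ≤ x coth x - 1 ≤ min (x² / 3) x`, each proved by differentiating once, give
`0 < 𝔏_δ(n) ≤ n² / 3`, `δ 𝔏_δ(n) ≤ |n|`, `𝔏_δ(n) ≳ |n|` for `δ ≤ 1`, and `𝔏_δ(n) → n² / 3` as
`δ → 0`. Because `δ 𝔏_δ(n) ≤ |n|`, every summand of either multiplier is nonnegative and at most a
binomial coefficient times the leading one (`ℓ = 1` for the odd multiplier, `ℓ = 0` for the even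
one), which gives the two-sided bounds. The multipliers are polynomials in `(δ, 𝔏_δ(n))` in which
every non-leading summand carries a positive power of `δ`, so the limits follow by continuity.
-/

open Real Filter

/-- `coth x = (e^x + e^{-x})/(e^x - e^{-x}) = cosh x / sinh x` (for `x ≠ 0`). -/
noncomputable def myCoth (x : ℝ) : ℝ := Real.cosh x / Real.sinh x

/-- The scaled ILW dispersion multiplier `𝔏_δ(n) = δ⁻¹ (n · coth(δn) − δ⁻¹)`. -/
noncomputable def Lmul (δ : ℝ) (n : ℤ) : ℝ := δ⁻¹ * ((n : ℝ) * myCoth (δ * n) - δ⁻¹)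

/-- The odd-order shallow-water Gaussian multiplier
`T̃_{δ,κ−1/2}(n) = Σ_{ℓ odd, 1 ≤ ℓ ≤ 2κ−1} (3/(2κ)) C(2κ,ℓ) δ^{ℓ−1} 𝔏_δ(n)^ℓ n^{2κ−1−ℓ}`,
normalized so that `ã_{2κ−1,1} = 3`. -/
noncomputable def TtOdd (κ : ℕ) (δ : ℝ) (n : ℤ) : ℝ :=
  ∑ ℓ ∈ Finset.range (2 * κ), if Odd ℓ then
    (3 / (2 * κ : ℝ)) * ((2 * κ).choose ℓ : ℝ) * δ ^ (ℓ - 1) * Lmul δ n ^ ℓ *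
      (n : ℝ) ^ (2 * κ - 1 - ℓ) else 0

/-- The even-order shallow-water Gaussian multiplier
`T̃_{δ,κ}(n) = Σ_{ℓ even, 0 ≤ ℓ ≤ 2κ} C(2κ+1,ℓ) δ^ℓ 𝔏_δ(n)^ℓ n^{2κ−ℓ}`,
with `ã_{2κ,0} = 1`. -/
noncomputable def TtEven (κ : ℕ) (δ : ℝ) (n : ℤ) : ℝ :=
  ∑ ℓ ∈ Finset.range (2 * κ + 1), if Even ℓ then
    ((2 * κ + 1).choose ℓ : ℝ) * δ ^ ℓ * Lmul δ n ^ ℓ * (n : ℝ) ^ (2 * κ - ℓ) else 0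

open Topology

section Hyperbolic

variable {x : ℝ}

lemma nonneg_of_hasDerivAt_of_nonneg {f f' : ℝ → ℝ} (hf : ∀ x, HasDerivAt f (f' x) x)
    (hf0 : f 0 = 0) (hf' : ∀ x, 0 < x → 0 ≤ f' x) (hx : 0 ≤ x) : 0 ≤ f x := by
  have hmono : MonotoneOn f (Set.Ici 0) :=
    monotoneOn_of_hasDerivWithinAt_nonneg (convex_Ici 0)
      (fun y _ => (hf y).continuousAt.continuousWithinAt) (fun y _ => (hf y).hasDerivWithinAt)
      (fun y hy => hf' y (by simpa using hy))
  simpa [hf0] using hmono Set.self_mem_Ici hx hx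

lemma hasDerivAt_mul_cosh_sub_sinh (x : ℝ) :
    HasDerivAt (fun y => y * cosh y - sinh y) (x * sinh x) x := by
  refine (((hasDerivAt_id' x).mul (hasDerivAt_cosh x)).sub (hasDerivAt_sinh x)).congr_deriv ?_
  ring

lemma cube_div_three_le_mul_cosh_sub_sinh (hx : 0 ≤ x) : x ^ 3 / 3 ≤ x * cosh x - sinh x := by
  have key := nonneg_of_hasDerivAt_of_nonneg (f := fun y => y * cosh y - sinh y - y ^ 3 / 3)
    (fun y => (hasDerivAt_mul_cosh_sub_sinh y).sub ((hasDerivAt_pow 3 y).div_const 3))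
    (by simp) (fun y hy => ?_) hx
  · simpa using key
  · have := self_lt_sinh_iff.mpr hy
    push_cast
    nlinarith

lemma mul_cosh_sub_sinh_le_sq_div_three_mul_sinh (hx : 0 ≤ x) :
    x * cosh x - sinh x ≤ x ^ 2 / 3 * sinh x := by
  have key := nonneg_of_hasDerivAt_of_nonneg
    (f := fun y => y ^ 2 / 3 * sinh y - (y * cosh y - sinh y))
    (fun y => (((hasDerivAt_pow 2 y).div_const 3).mul (hasDerivAt_sinh y)).sub
      (hasDerivAt_mul_cosh_sub_sinh y))
    (by simp) (fun y hy => ?_) hx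
  · simpa using key
  -- the derivative is `y / 3 * (y * cosh y - sinh y)`
  · have := cube_div_three_le_mul_cosh_sub_sinh hy.le
    push_cast
    nlinarith

lemma mul_cosh_sub_sinh_le_mul_sinh (hx : 0 ≤ x) : x * cosh x - sinh x ≤ x * sinh x := by
  have key := nonneg_of_hasDerivAt_of_nonneg (f := fun y => y * sinh y - (y * cosh y - sinh y))
    (fun y => ((hasDerivAt_id' y).mul (hasDerivAt_sinh y)).sub (hasDerivAt_mul_cosh_sub_sinh y))
    (by simp) (fun y hy => ?_) hx
  · simpa using key
  · have := sinh_lt_cosh y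
    have := sinh_pos_iff.mpr hy
    nlinarith

end Hyperbolic

section Coth

variable {x : ℝ}

lemma myCoth_neg (x : ℝ) : myCoth (-x) = -myCoth x := by
  simp [myCoth, div_neg]

lemma mul_myCoth_sub_one_eq (hx : 0 < x) :
    x * myCoth x - 1 = (x * cosh x - sinh x) / sinh x := by
  have := sinh_pos_iff.mpr hx
  rw [myCoth]
  field_simp

lemma cube_div_le_mul_myCoth_sub_one (hx : 0 < x) :
    x ^ 3 / (3 * sinh x) ≤ x * myCoth x - 1 := by
  rw [mul_myCoth_sub_one_eq hx, ← div_div]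
  gcongr
  exact cube_div_three_le_mul_cosh_sub_sinh hx.le

lemma mul_myCoth_sub_one_pos (hx : 0 < x) : 0 < x * myCoth x - 1 :=
  lt_of_lt_of_le (by have := sinh_pos_iff.mpr hx; positivity) (cube_div_le_mul_myCoth_sub_one hx)

lemma mul_myCoth_sub_one_le_sq_div_three (hx : 0 < x) : x * myCoth x - 1 ≤ x ^ 2 / 3 := by
  rw [mul_myCoth_sub_one_eq hx, div_le_iff₀ (sinh_pos_iff.mpr hx)]
  exact mul_cosh_sub_sinh_le_sq_div_three_mul_sinh hx.le

lemma mul_myCoth_sub_one_le_self (hx : 0 < x) : x * myCoth x - 1 ≤ x := by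
  rw [mul_myCoth_sub_one_eq hx, div_le_iff₀ (sinh_pos_iff.mpr hx)]
  exact mul_cosh_sub_sinh_le_mul_sinh hx.le

lemma min_sq_self_div_le_mul_myCoth_sub_one (hx : 0 < x) :
    min (x ^ 2) x / (3 * cosh 2) ≤ x * myCoth x - 1 := by
  have hs := sinh_pos_iff.mpr hx
  have hc2 : 1 ≤ cosh 2 := one_le_cosh 2
  rcases le_total x 2 with hx2 | hx2
  · -- `sinh x ≤ x cosh x ≤ x cosh 2` turns the cubic lower bound into a quadratic one
    have hsinh : sinh x ≤ x * cosh 2 := by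
      have hcube := cube_div_three_le_mul_cosh_sub_sinh hx.le
      have hcosh : cosh x ≤ cosh 2 := cosh_le_cosh.mpr (by rw [abs_of_pos hx, abs_two]; exact hx2)
      have := mul_le_mul_of_nonneg_left hcosh hx.le
      have : 0 < x ^ 3 := by positivity
      linarith
    calc min (x ^ 2) x / (3 * cosh 2) ≤ x ^ 3 / (3 * (x * cosh 2)) := by
          rw [show x ^ 3 / (3 * (x * cosh 2)) = x ^ 2 / (3 * cosh 2) by field_simp]
          gcongr
          exact min_le_left _ _
      _ ≤ x ^ 3 / (3 * sinh x) := by gcongr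
      _ ≤ x * myCoth x - 1 := cube_div_le_mul_myCoth_sub_one hx
  · -- for `x ≥ 2`, `coth x ≥ 1` gives `x coth x - 1 ≥ x - 1 ≥ x / 3`
    have hcoth : 1 ≤ myCoth x := (one_le_div hs).mpr (sinh_lt_cosh x).le
    calc min (x ^ 2) x / (3 * cosh 2) ≤ x / 3 :=
          div_le_div₀ hx.le (min_le_right _ _) (by norm_num) (by linarith)
      _ ≤ x * myCoth x - 1 := by nlinarith

lemma tendsto_div_sinh_nhdsGT_zero : Tendsto (fun x => x / sinh x) (𝓝[>] 0) (𝓝 1) := by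
  have h := (hasDerivAt_sinh 0).tendsto_slope_zero_right
  simp only [zero_add, sinh_zero, sub_zero, cosh_zero, smul_eq_mul] at h
  simpa [div_eq_inv_mul] using h.inv₀ one_ne_zero

lemma tendsto_mul_myCoth_sub_one_div_sq :
    Tendsto (fun x => (x * myCoth x - 1) / x ^ 2) (𝓝[>] 0) (𝓝 (1 / 3)) := by
  refine tendsto_of_tendsto_of_tendsto_of_le_of_le' (g := fun x => x / sinh x / 3)
    (by simpa using tendsto_div_sinh_nhdsGT_zero.div_const 3) tendsto_const_nhds ?_ ?_
  all_goals filter_upwards [self_mem_nhdsWithin] with x (hx : 0 < x)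
  · have := sinh_pos_iff.mpr hx
    rw [le_div_iff₀ (by positivity)]
    calc x / sinh x / 3 * x ^ 2 = x ^ 3 / (3 * sinh x) := by field_simp
      _ ≤ x * myCoth x - 1 := cube_div_le_mul_myCoth_sub_one hx
  · rw [div_le_iff₀ (by positivity)]
    linarith [mul_myCoth_sub_one_le_sq_div_three hx]

end Coth

section Lmul

variable {δ : ℝ} {n : ℤ}

lemma Lmul_eq (hδ : δ ≠ 0) :
    Lmul δ n = (δ * |(n : ℝ)| * myCoth (δ * |(n : ℝ)|) - 1) / δ ^ 2 := by
  have hcoth : (n : ℝ) * myCoth (δ * n) = |(n : ℝ)| * myCoth (δ * |(n : ℝ)|) := by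
    rcases abs_choice (n : ℝ) with h | h <;> rw [h]
    rw [mul_neg, myCoth_neg]
    ring
  rw [Lmul, hcoth]
  field_simp

variable (hδ : 0 < δ) (hn : n ≠ 0)
include hδ hn

lemma Lmul_pos : 0 < Lmul δ n := by
  have : 0 < |(n : ℝ)| := by positivity
  rw [Lmul_eq hδ.ne']
  exact div_pos (mul_myCoth_sub_one_pos (by positivity)) (by positivity)

lemma Lmul_le_sq_div_three : Lmul δ n ≤ (n : ℝ) ^ 2 / 3 := by
  have : 0 < |(n : ℝ)| := by positivity
  have h := mul_myCoth_sub_one_le_sq_div_three (x := δ * |(n : ℝ)|) (by positivity)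
  rw [Lmul_eq hδ.ne', div_le_iff₀ (by positivity)]
  rw [mul_pow, sq_abs] at h
  linarith

lemma mul_Lmul_le_abs : δ * Lmul δ n ≤ |(n : ℝ)| := by
  have : 0 < |(n : ℝ)| := by positivity
  have h := mul_myCoth_sub_one_le_self (x := δ * |(n : ℝ)|) (by positivity)
  rw [Lmul_eq hδ.ne', mul_div_assoc', div_le_iff₀ (by positivity)]
  nlinarith

lemma abs_div_le_Lmul (hδ1 : δ ≤ 1) : |(n : ℝ)| / (3 * cosh 2) ≤ Lmul δ n := by
  have hn1 : (1 : ℝ) ≤ |(n : ℝ)| := by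
    rw [← Int.cast_abs]
    exact_mod_cast Int.one_le_abs hn
  have hmin : δ ^ 2 * |(n : ℝ)| ≤ min ((δ * |(n : ℝ)|) ^ 2) (δ * |(n : ℝ)|) := by
    have hδn : 0 < δ * |(n : ℝ)| := by positivity
    exact le_min (by nlinarith) (by nlinarith [mul_nonneg hδn.le (sub_nonneg.mpr hδ1)])
  have h := min_sq_self_div_le_mul_myCoth_sub_one (x := δ * |(n : ℝ)|) (by positivity)
  rw [Lmul_eq hδ.ne', le_div_iff₀ (by positivity)]
  calc |(n : ℝ)| / (3 * cosh 2) * δ ^ 2 = δ ^ 2 * |(n : ℝ)| / (3 * cosh 2) := by ring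
    _ ≤ min ((δ * |(n : ℝ)|) ^ 2) (δ * |(n : ℝ)|) / (3 * cosh 2) := by gcongr
    _ ≤ _ := h

end Lmul

lemma tendsto_Lmul {n : ℤ} (hn : n ≠ 0) :
    Tendsto (fun δ => Lmul δ n) (𝓝[>] 0) (𝓝 ((n : ℝ) ^ 2 / 3)) := by
  have hn' : 0 < |(n : ℝ)| := by positivity
  have hx : Tendsto (fun δ => δ * |(n : ℝ)|) (𝓝[>] 0) (𝓝[>] 0) := by
    refine tendsto_nhdsWithin_iff.mpr ⟨?_, ?_⟩
    · simpa using ((continuous_mul_const |(n : ℝ)|).tendsto 0).mono_left nhdsWithin_le_nhds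
    · filter_upwards [self_mem_nhdsWithin] with δ (hδ : 0 < δ)
      exact mul_pos hδ hn'
  have h := (tendsto_mul_myCoth_sub_one_div_sq.comp hx).const_mul ((n : ℝ) ^ 2)
  rw [mul_one_div] at h
  refine h.congr' ?_
  filter_upwards [self_mem_nhdsWithin] with δ (hδ : 0 < δ)
  rw [Function.comp_apply, Lmul_eq hδ.ne', mul_pow, sq_abs]
  field_simp

open Finset

section Terms

variable {κ ℓ : ℕ} {δ y x : ℝ}

-- The `ℓ`-th summands of `TtOdd` and `TtEven` with `𝔏_δ(n)` replaced by a free variable `y`, so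
-- that the limit `δ → 0` becomes a continuity statement in `(δ, y)`.
noncomputable def oddTerm (κ ℓ : ℕ) (δ y x : ℝ) : ℝ :=
  if Odd ℓ then (3 / (2 * κ : ℝ)) * ((2 * κ).choose ℓ : ℝ) * δ ^ (ℓ - 1) * y ^ ℓ *
    x ^ (2 * κ - 1 - ℓ) else 0

noncomputable def evenTerm (κ ℓ : ℕ) (δ y x : ℝ) : ℝ :=
  if Even ℓ then ((2 * κ + 1).choose ℓ : ℝ) * δ ^ ℓ * y ^ ℓ * x ^ (2 * κ - ℓ) else 0

lemma TtOdd_eq_sum_oddTerm (κ : ℕ) (δ : ℝ) (n : ℤ) :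
    TtOdd κ δ n = ∑ ℓ ∈ range (2 * κ), oddTerm κ ℓ δ (Lmul δ n) n := rfl

lemma TtEven_eq_sum_evenTerm (κ : ℕ) (δ : ℝ) (n : ℤ) :
    TtEven κ δ n = ∑ ℓ ∈ range (2 * κ + 1), evenTerm κ ℓ δ (Lmul δ n) n := rfl

lemma oddTerm_mem_Icc (hδ : 0 ≤ δ) (hy : 0 ≤ y) (hδy : δ * y ≤ |x|) (hℓ : ℓ < 2 * κ) :
    oddTerm κ ℓ δ y x ∈
      Set.Icc 0 ((2 * κ).choose ℓ * (3 / (2 * κ : ℝ) * y * |x| ^ (2 * κ - 2))) := by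
  unfold oddTerm
  split_ifs with hodd
  · obtain ⟨j, rfl⟩ := hodd
    obtain ⟨k, rfl⟩ : ∃ k, κ = j + k + 1 := ⟨κ - j - 1, by omega⟩
    rw [show 2 * j + 1 - 1 = 2 * j by omega,
      show 2 * (j + k + 1) - 1 - (2 * j + 1) = 2 * k by omega,
      show 2 * (j + k + 1) - 2 = 2 * j + 2 * k by omega, ← (even_two_mul k).pow_abs, pow_add]
    have hpow : (δ * y) ^ (2 * j) ≤ |x| ^ (2 * j) := pow_le_pow_left₀ (by positivity) hδy _
    rw [show 3 / (2 * (j + k + 1 : ℕ) : ℝ) * ((2 * (j + k + 1)).choose (2 * j + 1) : ℝ) *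
        δ ^ (2 * j) * y ^ (2 * j + 1) * |x| ^ (2 * k) = ((2 * (j + k + 1)).choose (2 * j + 1) : ℝ) *
        (3 / (2 * (j + k + 1 : ℕ) : ℝ) * y * ((δ * y) ^ (2 * j) * |x| ^ (2 * k))) by ring]
    exact ⟨by positivity, by gcongr⟩
  · exact ⟨le_rfl, by positivity⟩

lemma evenTerm_mem_Icc (hδ : 0 ≤ δ) (hy : 0 ≤ y) (hδy : δ * y ≤ |x|) (hℓ : ℓ < 2 * κ + 1) :
    evenTerm κ ℓ δ y x ∈ Set.Icc 0 ((2 * κ + 1).choose ℓ * x ^ (2 * κ)) := by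
  unfold evenTerm
  have hx : x ^ (2 * κ) = |x| ^ (2 * κ) := ((even_two_mul κ).pow_abs x).symm
  split_ifs with hev
  · obtain ⟨j, rfl⟩ := hev
    obtain ⟨k, rfl⟩ : ∃ k, κ = j + k := ⟨κ - j, by omega⟩
    rw [show 2 * (j + k) - (j + j) = 2 * k by omega, hx, ← (even_two_mul k).pow_abs,
      show 2 * (j + k) = (j + j) + 2 * k by omega, pow_add, mul_assoc _ (δ ^ (j + j)), ← mul_pow,
      mul_assoc]
    have hpow : (δ * y) ^ (j + j) ≤ |x| ^ (j + j) := pow_le_pow_left₀ (by positivity) hδy _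
    exact ⟨by positivity, by gcongr⟩
  · exact ⟨le_rfl, by rw [hx]; positivity⟩

lemma oddTerm_one (hκ : 1 ≤ κ) : oddTerm κ 1 δ y x = 3 * y * x ^ (2 * κ - 2) := by
  have : (κ : ℝ) ≠ 0 := by positivity
  rw [oddTerm, if_pos odd_one, Nat.choose_one_right, show 2 * κ - 1 - 1 = 2 * κ - 2 by omega]
  push_cast
  field_simp

lemma evenTerm_zero : evenTerm κ 0 δ y x = x ^ (2 * κ) := by
  simp [evenTerm]

lemma oddTerm_zero_of_ne_one (hℓ : ℓ ≠ 1) : oddTerm κ ℓ 0 y x = 0 := by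
  unfold oddTerm
  split_ifs with hodd
  · rw [zero_pow (by obtain ⟨j, rfl⟩ := hodd; omega)]
    ring
  · rfl

lemma evenTerm_zero_of_ne_zero (hℓ : ℓ ≠ 0) : evenTerm κ ℓ 0 y x = 0 := by
  simp [evenTerm, hℓ]

lemma continuous_oddTerm : Continuous fun p : ℝ × ℝ => oddTerm κ ℓ p.1 p.2 x := by
  unfold oddTerm
  split_ifs <;> fun_prop

lemma continuous_evenTerm : Continuous fun p : ℝ × ℝ => evenTerm κ ℓ p.1 p.2 x := by
  unfold evenTerm
  split_ifs <;> fun_prop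

end Terms

lemma sum_range_choose_mul_le {m M : ℕ} (hm : m ≤ M + 1) {B : ℝ} (hB : 0 ≤ B) :
    ∑ ℓ ∈ range m, (M.choose ℓ : ℝ) * B ≤ 2 ^ M * B := by
  rw [← sum_mul]
  gcongr
  have := sum_le_sum_of_subset (f := fun ℓ => M.choose ℓ) (range_subset_range.mpr hm)
  rw [Nat.sum_range_choose] at this
  exact_mod_cast this

section Multipliers

variable {κ : ℕ} {δ : ℝ} {n : ℤ}

lemma inv_cosh_two_mul_abs_pow_le_TtOdd (hκ : 1 ≤ κ) (hδ : 0 < δ) (hδ1 : δ ≤ 1) (hn : n ≠ 0) :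
    (cosh 2)⁻¹ * |(n : ℝ)| ^ (2 * κ - 1) ≤ TtOdd κ δ n := by
  calc (cosh 2)⁻¹ * |(n : ℝ)| ^ (2 * κ - 1)
      = 3 * (|(n : ℝ)| / (3 * cosh 2)) * |(n : ℝ)| ^ (2 * κ - 2) := by
        rw [show 2 * κ - 1 = 2 * κ - 2 + 1 by omega, pow_succ]
        field_simp
    _ ≤ 3 * Lmul δ n * |(n : ℝ)| ^ (2 * κ - 2) := by
        have := abs_div_le_Lmul hδ hn hδ1
        have := Lmul_pos hδ hn
        gcongr
    _ = 3 * Lmul δ n * (n : ℝ) ^ (2 * κ - 2) := by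
        rw [(show Even (2 * κ - 2) from ⟨κ - 1, by omega⟩).pow_abs]
    _ = oddTerm κ 1 δ (Lmul δ n) n := (oddTerm_one hκ).symm
    _ ≤ TtOdd κ δ n := single_le_sum (fun ℓ hℓ => (oddTerm_mem_Icc hδ.le (Lmul_pos hδ hn).le
          (mul_Lmul_le_abs hδ hn) (mem_range.mp hℓ)).1) (mem_range.mpr (by omega))

lemma TtOdd_le (hδ : 0 < δ) (hn : n ≠ 0) :
    TtOdd κ δ n ≤ 2 ^ (2 * κ) * (3 / (2 * κ : ℝ) * Lmul δ n * |(n : ℝ)| ^ (2 * κ - 2)) :=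
  calc TtOdd κ δ n ≤ ∑ ℓ ∈ range (2 * κ),
          (2 * κ).choose ℓ * (3 / (2 * κ : ℝ) * Lmul δ n * |(n : ℝ)| ^ (2 * κ - 2)) :=
        sum_le_sum fun ℓ hℓ => (oddTerm_mem_Icc hδ.le (Lmul_pos hδ hn).le (mul_Lmul_le_abs hδ hn)
          (mem_range.mp hℓ)).2
    _ ≤ _ := sum_range_choose_mul_le (by omega) (by have := Lmul_pos hδ hn; positivity)

lemma Lmul_mul_abs_pow_le_min (hκ : 1 ≤ κ) (hδ : 0 < δ) (hn : n ≠ 0) :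
    Lmul δ n * |(n : ℝ)| ^ (2 * κ - 2) ≤
      min (δ⁻¹ * |(n : ℝ)| ^ (2 * κ - 1)) ((n : ℝ) ^ (2 * κ)) := by
  refine le_min ?_ ?_
  · calc Lmul δ n * |(n : ℝ)| ^ (2 * κ - 2) ≤ δ⁻¹ * |(n : ℝ)| * |(n : ℝ)| ^ (2 * κ - 2) := by
          gcongr
          rw [le_inv_mul_iff₀ hδ]
          exact mul_Lmul_le_abs hδ hn
      _ = δ⁻¹ * |(n : ℝ)| ^ (2 * κ - 1) := by
          rw [show 2 * κ - 1 = 2 * κ - 2 + 1 by omega, pow_succ]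
          ring
  · calc Lmul δ n * |(n : ℝ)| ^ (2 * κ - 2) ≤ (n : ℝ) ^ 2 / 3 * |(n : ℝ)| ^ (2 * κ - 2) := by
          gcongr
          exact Lmul_le_sq_div_three hδ hn
      _ ≤ |(n : ℝ)| ^ 2 * |(n : ℝ)| ^ (2 * κ - 2) := by
          rw [sq_abs]
          gcongr
          linarith [sq_nonneg (n : ℝ)]
      _ = (n : ℝ) ^ (2 * κ) := by
          rw [← pow_add, show 2 + (2 * κ - 2) = 2 * κ by omega, (even_two_mul κ).pow_abs]

lemma TtOdd_le_mul_min (hκ : 1 ≤ κ) (hδ : 0 < δ) (hn : n ≠ 0) :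
    TtOdd κ δ n ≤
      2 ^ (2 * κ) * (3 / (2 * κ : ℝ)) * min (δ⁻¹ * |(n : ℝ)| ^ (2 * κ - 1)) ((n : ℝ) ^ (2 * κ)) :=
  calc TtOdd κ δ n ≤ 2 ^ (2 * κ) * (3 / (2 * κ : ℝ)) * (Lmul δ n * |(n : ℝ)| ^ (2 * κ - 2)) := by
        simpa only [mul_assoc] using TtOdd_le hδ hn
    _ ≤ _ := by
        gcongr
        exact Lmul_mul_abs_pow_le_min hκ hδ hn

lemma pow_le_TtEven (hδ : 0 < δ) (hn : n ≠ 0) : (n : ℝ) ^ (2 * κ) ≤ TtEven κ δ n := by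
  rw [TtEven_eq_sum_evenTerm, ← evenTerm_zero (δ := δ) (y := Lmul δ n)]
  exact single_le_sum (fun ℓ hℓ => (evenTerm_mem_Icc hδ.le (Lmul_pos hδ hn).le
    (mul_Lmul_le_abs hδ hn) (mem_range.mp hℓ)).1) (mem_range.mpr (by omega))

lemma TtEven_le (hδ : 0 < δ) (hn : n ≠ 0) : TtEven κ δ n ≤ 2 ^ (2 * κ + 1) * (n : ℝ) ^ (2 * κ) :=
  calc TtEven κ δ n ≤ ∑ ℓ ∈ range (2 * κ + 1), (2 * κ + 1).choose ℓ * (n : ℝ) ^ (2 * κ) :=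
        sum_le_sum fun ℓ hℓ => (evenTerm_mem_Icc hδ.le (Lmul_pos hδ hn).le (mul_Lmul_le_abs hδ hn)
          (mem_range.mp hℓ)).2
    _ ≤ _ := sum_range_choose_mul_le (by omega) ((even_two_mul κ).pow_nonneg _)

lemma tendsto_prodMk_Lmul (hn : n ≠ 0) : Tendsto (fun δ => (δ, Lmul δ n)) (𝓝[>] 0)
    (𝓝 (0, (n : ℝ) ^ 2 / 3)) :=
  (tendsto_id.mono_left nhdsWithin_le_nhds).prodMk_nhds (tendsto_Lmul hn)

lemma tendsto_TtOdd (hκ : 1 ≤ κ) (hn : n ≠ 0) :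
    Tendsto (fun δ => TtOdd κ δ n) (𝓝[>] 0) (𝓝 ((n : ℝ) ^ (2 * κ))) := by
  have h := tendsto_finsetSum (range (2 * κ)) fun ℓ _ =>
    (continuous_oddTerm (κ := κ) (ℓ := ℓ) (x := n)).continuousAt.tendsto.comp
      (tendsto_prodMk_Lmul hn)
  rwa [sum_eq_single_of_mem 1 (mem_range.mpr (by omega)) fun ℓ _ hℓ => oddTerm_zero_of_ne_one hℓ,
    oddTerm_one hκ, ← mul_div_assoc, mul_div_cancel_left₀ _ three_ne_zero, ← pow_add,
    show 2 + (2 * κ - 2) = 2 * κ by omega] at h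

lemma tendsto_TtEven (hn : n ≠ 0) :
    Tendsto (fun δ => TtEven κ δ n) (𝓝[>] 0) (𝓝 ((n : ℝ) ^ (2 * κ))) := by
  have h := tendsto_finsetSum (range (2 * κ + 1)) fun ℓ _ =>
    (continuous_evenTerm (κ := κ) (ℓ := ℓ) (x := n)).continuousAt.tendsto.comp
      (tendsto_prodMk_Lmul hn)
  rwa [sum_eq_single_of_mem 0 (mem_range.mpr (by omega)) fun ℓ _ hℓ => evenTerm_zero_of_ne_zero hℓ,
    evenTerm_zero] at h

end Multipliers

/-- For `κ ≥ 1`: for every nonzero `n`, `T̃_{δ,κ−1/2}(n) → n^{2κ}` and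
`T̃_{δ,κ}(n) → n^{2κ}` as `δ → 0`.  Moreover, for fixed `0 < δ ≤ 1` one has
`|n|^{2κ−1} ≲_δ T̃_{δ,κ−1/2}(n) ≲ min(δ^{−1}|n|^{2κ−1}, n^{2κ})` (the upper bound being
uniform in `0 < δ ≤ 1`), and `T̃_{δ,κ}(n)` is comparable to `n^{2κ}` uniformly in `n` and
`0 < δ ≤ 1`. -/
theorem stmt18 (κ : ℕ) (hκ : 1 ≤ κ) :
    (∀ n : ℤ, n ≠ 0 →
      Tendsto (fun δ : ℝ => TtOdd κ δ n) (nhdsWithin 0 (Set.Ioi 0))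
        (nhds ((n : ℝ) ^ (2 * κ))) ∧
      Tendsto (fun δ : ℝ => TtEven κ δ n) (nhdsWithin 0 (Set.Ioi 0))
        (nhds ((n : ℝ) ^ (2 * κ)))) ∧
    (∀ δ : ℝ, 0 < δ → δ ≤ 1 → ∃ c : ℝ, 0 < c ∧ ∀ n : ℤ, n ≠ 0 →
      c * |(n : ℝ)| ^ (2 * κ - 1) ≤ TtOdd κ δ n) ∧
    (∃ C : ℝ, 0 < C ∧ ∀ δ : ℝ, 0 < δ → δ ≤ 1 → ∀ n : ℤ, n ≠ 0 →
      TtOdd κ δ n ≤ C * min (δ⁻¹ * |(n : ℝ)| ^ (2 * κ - 1)) ((n : ℝ) ^ (2 * κ))) ∧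
    (∃ c C : ℝ, 0 < c ∧ 0 < C ∧ ∀ δ : ℝ, 0 < δ → δ ≤ 1 → ∀ n : ℤ, n ≠ 0 →
      c * (n : ℝ) ^ (2 * κ) ≤ TtEven κ δ n ∧ TtEven κ δ n ≤ C * (n : ℝ) ^ (2 * κ)) := by
  have hκ' : (0 : ℝ) < κ := by exact_mod_cast hκ
  refine ⟨fun n hn => ⟨tendsto_TtOdd hκ hn, tendsto_TtEven hn⟩, ?_, ?_, ?_⟩
  · exact fun δ hδ hδ1 => ⟨(cosh 2)⁻¹, by positivity,
      fun n hn => inv_cosh_two_mul_abs_pow_le_TtOdd hκ hδ hδ1 hn⟩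
  · exact ⟨2 ^ (2 * κ) * (3 / (2 * κ)), by positivity,
      fun δ hδ _ n hn => TtOdd_le_mul_min hκ hδ hn⟩
  · exact ⟨1, 2 ^ (2 * κ + 1), one_pos, by positivity, fun δ hδ _ n hn =>
      ⟨(one_mul _).trans_le (pow_le_TtEven hδ hn), TtEven_le hδ hn⟩⟩
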